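/- arXiv:2602.18235 — 4 statements merged into one kernel-verified Lean document; each statement's English description precedes it below -/
import Mathlib

section
/- Let V be a finite set of integers and let 𝓐 be a finite family of finite arithmetic progressions, each with difference a power of 2. Then there exist a finite set P ⊆ ℝ², a bijection f : V → P, and for each A ∈ 𝓐 an axis-parallel rectangle R_A, such that for every A ∈ 𝓐 the image f(A ∩ V) equals P ∩ R_A, and the y-projections of the rectangles {R_A : A ∈ 𝓐} form a nested family. -/
/-- The axis-parallel rectangle `[x₁,x₂] × [y₁,y₂]` encoded by the quadruple
`(x₁, x₂, y₁, y₂)`. -/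
def rectSet (r : ℝ × ℝ × ℝ × ℝ) : Set (ℝ × ℝ) :=
  Set.Icc r.1 r.2.1 ×ˢ Set.Icc r.2.2.1 r.2.2.2

/-- The `y`-projection `[y₁,y₂]` of the rectangle encoded by `(x₁, x₂, y₁, y₂)`. -/
def yProj (r : ℝ × ℝ × ℝ × ℝ) : Set ℝ := Set.Icc r.2.2.1 r.2.2.2

/-- The finite arithmetic progression `{b, b + d, …, b + (m-1)d}`. -/
def AP (b d : ℤ) (m : ℕ) : Set ℤ := {x | ∃ i : ℕ, i < m ∧ x = b + i * d}

/-! Send `n` to the point `(n, bitRev N n)`, where `bitRev N n` reverses the lowest `N` binary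
digits of `n` and `2 ^ N` is the largest difference that occurs. A progression with difference
`2 ^ t` is a residue class mod `2 ^ t` cut down to an interval of `x`-values. The class of `n` is
given by its lowest `t` digits, which become the highest `t` digits of `bitRev N n`; so the class
is exactly the set of `n` with `bitRev N n` in a dyadic interval of length `2 ^ (N - t)`. Dyadic
intervals are nested or disjoint. -/

def bitRev : ℕ → ℤ → ℤ
  | 0, _ => 0
  | N + 1, n => bitRev N (n / 2) + n % 2 * 2 ^ N

lemma bitRev_nonneg_lt (N : ℕ) (n : ℤ) : 0 ≤ bitRev N n ∧ bitRev N n < 2 ^ N := by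
  induction N generalizing n with
  | zero => simp [bitRev]
  | succ N ih =>
    obtain ⟨h0, hlt⟩ := ih (n / 2)
    rw [bitRev, pow_succ]
    rcases Int.emod_two_eq n with h | h <;> rw [h] <;> omega

lemma bitRev_ediv_two_pow {t N : ℕ} (ht : t ≤ N) (n : ℤ) :
    bitRev N n / 2 ^ (N - t) = bitRev t n := by
  induction N generalizing n t with
  | zero =>
    obtain rfl : t = 0 := by omega
    simp [bitRev]
  | succ N ih =>
    cases t with
    | zero => exact Int.ediv_eq_zero_of_lt (bitRev_nonneg_lt _ n).1 (bitRev_nonneg_lt _ n).2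
    | succ t =>
      have hsplit : (2 : ℤ) ^ N = 2 ^ t * 2 ^ (N - t) := by rw [← pow_add]; congr 1; omega
      rw [Nat.add_sub_add_right, bitRev, bitRev, hsplit, ← mul_assoc,
        Int.add_mul_ediv_right _ _ (by positivity), ih (by omega)]

lemma Int.modEq_mul_iff {b d : ℤ} (hb : b ≠ 0) {n n' : ℤ} :
    n ≡ n' [ZMOD b * d] ↔ n % b = n' % b ∧ n / b ≡ n' / b [ZMOD d] := by
  have hdiff : n' - n = b * (n' / b - n / b) + (n' % b - n % b) := by
    linarith [Int.emod_add_mul_ediv n b, Int.emod_add_mul_ediv n' b]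
  constructor
  · intro h
    have hb' : n % b = n' % b := Int.ModEq.of_mul_right d h
    refine ⟨hb', Int.modEq_iff_dvd.mpr ?_⟩
    rw [hb', sub_self, add_zero] at hdiff
    exact Int.dvd_of_mul_dvd_mul_left hb (hdiff ▸ h.dvd)
  · rintro ⟨hb', hq⟩
    rw [hb', sub_self, add_zero] at hdiff
    exact Int.modEq_iff_dvd.mpr (hdiff ▸ mul_dvd_mul_left b hq.dvd)

lemma Int.add_mul_eq_add_mul_iff {B x x' q q' : ℤ} (hx : 0 ≤ x ∧ x < B)
    (hx' : 0 ≤ x' ∧ x' < B) :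
    x + q * B = x' + q' * B ↔ x = x' ∧ q = q' := by
  refine ⟨fun h => ?_, fun ⟨hx, hq⟩ => hx ▸ hq ▸ rfl⟩
  have hB : B ≠ 0 := by omega
  have hq : q = q' := by
    simpa [Int.add_mul_ediv_right _ _ hB, Int.ediv_eq_zero_of_lt hx.1 hx.2,
      Int.ediv_eq_zero_of_lt hx'.1 hx'.2] using congrArg (· / B) h
  exact ⟨by subst hq; omega, hq⟩

lemma bitRev_eq_iff_modEq (t : ℕ) (n n' : ℤ) :
    bitRev t n = bitRev t n' ↔ n ≡ n' [ZMOD 2 ^ t] := by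
  induction t generalizing n n' with
  | zero => simp [bitRev, Int.modEq_one]
  | succ t ih =>
    rw [bitRev, bitRev,
      Int.add_mul_eq_add_mul_iff (bitRev_nonneg_lt t _) (bitRev_nonneg_lt t _), ih, pow_succ',
      Int.modEq_mul_iff two_ne_zero, and_comm]

lemma mem_AP_iff {b d : ℤ} (hd : 0 < d) (m : ℕ) (n : ℤ) :
    n ∈ AP b d m ↔ n ≡ b [ZMOD d] ∧ b ≤ n ∧ n ≤ b + (m - 1) * d := by
  constructor
  · rintro ⟨i, hi, rfl⟩
    have hi' : (i : ℤ) ≤ m - 1 := by omega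
    refine ⟨by simp [Int.ModEq], le_add_of_nonneg_right (by positivity), ?_⟩
    nlinarith
  · rintro ⟨hmod, hbn, hnm⟩
    obtain ⟨j, hj⟩ := hmod.symm.dvd
    have hj0 : 0 ≤ j := by nlinarith
    have hjm : j < m := by nlinarith
    lift j to ℕ using hj0
    exact ⟨j, by exact_mod_cast hjm, by linarith⟩

lemma dyadic_nested_or_disjoint {k k' : ℕ} (hk : k ≤ k') (c c' : ℤ) :
    (c' * 2 ^ k' ≤ c * 2 ^ k ∧ (c + 1) * 2 ^ k ≤ (c' + 1) * 2 ^ k') ∨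
      (c + 1) * 2 ^ k ≤ c' * 2 ^ k' ∨ (c' + 1) * 2 ^ k' ≤ c * 2 ^ k := by
  obtain ⟨j, rfl⟩ := Nat.exists_eq_add_of_le hk
  have hB : (0 : ℤ) < 2 ^ j := by positivity
  have hK : (0 : ℤ) < 2 ^ k := by positivity
  have hc := Int.emod_add_mul_ediv c (2 ^ j)
  have hr0 := Int.emod_nonneg c hB.ne'
  have hrB := Int.emod_lt_of_pos c hB
  rw [pow_add]
  rcases lt_trichotomy (c / 2 ^ j) c' with hq | rfl | hq
  · have : c + 1 ≤ c' * 2 ^ j := by nlinarith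
    right; left; nlinarith
  · left; constructor <;> nlinarith
  · have : (c' + 1) * 2 ^ j ≤ c := by nlinarith
    right; right; nlinarith

def dyadicIcc (k : ℕ) (c : ℤ) : Set ℝ :=
  Set.Icc ((c * 2 ^ k : ℤ) : ℝ) (((c + 1) * 2 ^ k - 1 : ℤ) : ℝ)

lemma dyadicIcc_nested (k k' : ℕ) (c c' : ℤ) :
    dyadicIcc k c ⊆ dyadicIcc k' c' ∨ dyadicIcc k' c' ⊆ dyadicIcc k c ∨
      dyadicIcc k c ∩ dyadicIcc k' c' = ∅ := by
  wlog hk : k ≤ k' generalizing k k' c c'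
  · rcases this k' k c' c (by omega) with h | h | h
    · exact Or.inr (Or.inl h)
    · exact Or.inl h
    · exact Or.inr (Or.inr (Set.inter_comm _ _ ▸ h))
  rcases dyadic_nested_or_disjoint hk c c' with ⟨h₁, h₂⟩ | h | h
  · exact Or.inl (Set.Icc_subset_Icc (Int.cast_le.2 h₁) (Int.cast_le.2 (by linarith)))
  · have h' : (((c + 1) * 2 ^ k - 1 : ℤ) : ℝ) < (c' * 2 ^ k' : ℤ) :=
      Int.cast_lt.2 (by linarith)
    refine Or.inr (Or.inr (Set.eq_empty_iff_forall_notMem.mpr ?_))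
    rintro x ⟨⟨-, hx⟩, hx', -⟩
    linarith
  · have h' : (((c' + 1) * 2 ^ k' - 1 : ℤ) : ℝ) < (c * 2 ^ k : ℤ) :=
      Int.cast_lt.2 (by linarith)
    refine Or.inr (Or.inr (Set.eq_empty_iff_forall_notMem.mpr ?_))
    rintro x ⟨⟨hx, -⟩, -, hx'⟩
    linarith

def bitRevPoint (N : ℕ) (n : ℤ) : ℝ × ℝ := (n, bitRev N n)

lemma bitRevPoint_injective (N : ℕ) : Function.Injective (bitRevPoint N) :=
  fun _ _ h => Int.cast_injective (congrArg Prod.fst h)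

def apRect (N t : ℕ) (b : ℤ) (m : ℕ) : ℝ × ℝ × ℝ × ℝ :=
  (b, ((b + (m - 1) * 2 ^ t : ℤ) : ℝ),
    ((bitRev t b * 2 ^ (N - t) : ℤ) : ℝ), (((bitRev t b + 1) * 2 ^ (N - t) - 1 : ℤ) : ℝ))

lemma yProj_apRect (N t : ℕ) (b : ℤ) (m : ℕ) :
    yProj (apRect N t b m) = dyadicIcc (N - t) (bitRev t b) := rfl

lemma apRect_le {m : ℕ} (hm : 1 ≤ m) (N t : ℕ) (b : ℤ) :
    (apRect N t b m).1 ≤ (apRect N t b m).2.1 ∧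
      (apRect N t b m).2.2.1 ≤ (apRect N t b m).2.2.2 := by
  have hm' : (0 : ℤ) ≤ m - 1 := by omega
  have hK : (1 : ℤ) ≤ 2 ^ (N - t) := one_le_pow₀ one_le_two
  refine ⟨Int.cast_le.2 ?_, Int.cast_le.2 ?_⟩
  · nlinarith [pow_pos (two_pos (α := ℤ)) t]
  · linarith

lemma bitRevPoint_mem_apRect_iff {N t : ℕ} (ht : t ≤ N) (b : ℤ) (m : ℕ) (n : ℤ) :
    bitRevPoint N n ∈ rectSet (apRect N t b m) ↔ n ∈ AP b (2 ^ t) m := by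
  rw [mem_AP_iff (by positivity), ← bitRev_eq_iff_modEq, ← bitRev_ediv_two_pow ht,
    Int.ediv_eq_iff_of_pos (by positivity)]
  simp only [rectSet, apRect, bitRevPoint, Set.mem_prod, Set.mem_Icc, Int.cast_le,
    Int.le_sub_one_iff, add_one_mul]
  exact and_comm

lemma image_AP_inter {N t : ℕ} (ht : t ≤ N) (b : ℤ) (m : ℕ) (V : Set ℤ) :
    bitRevPoint N '' (AP b (2 ^ t) m ∩ V) = bitRevPoint N '' V ∩ rectSet (apRect N t b m) := by
  have hpre : AP b (2 ^ t) m = bitRevPoint N ⁻¹' rectSet (apRect N t b m) :=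
    Set.ext fun n => (bitRevPoint_mem_apRect_iff ht b m n).symm
  rw [hpre, Set.inter_comm, Set.image_inter_preimage]

/-- Any finite set `V ⊆ ℤ` together with a finite family `𝓐` of finite arithmetic
progressions, each with difference a power of 2, can be realized by a finite planar point
set `P` and axis-parallel rectangles whose `y`-projections are nested: there are a
bijection `f : V → P` and a rectangle `R a` for each `a ∈ 𝓐` with
`f '' (A ∩ V) = P ∩ R a`.  A progression is encoded as `(b, d, m) : ℤ × ℤ × ℕ`. -/
theorem statement3 (V : Finset ℤ) (𝓐 : Finset (ℤ × ℤ × ℕ))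
    (h𝓐 : ∀ a ∈ 𝓐, (∃ t : ℕ, a.2.1 = 2 ^ t) ∧ 1 ≤ a.2.2) :
    ∃ (P : Finset (ℝ × ℝ)) (f : ℤ → ℝ × ℝ) (R : ℤ × ℤ × ℕ → ℝ × ℝ × ℝ × ℝ),
      Set.BijOn f (V : Set ℤ) (P : Set (ℝ × ℝ)) ∧
      (∀ a ∈ 𝓐, (R a).1 ≤ (R a).2.1 ∧ (R a).2.2.1 ≤ (R a).2.2.2) ∧
      (∀ a ∈ 𝓐, f '' (AP a.1 a.2.1 a.2.2 ∩ (V : Set ℤ)) =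
        (P : Set (ℝ × ℝ)) ∩ rectSet (R a)) ∧
      ∀ a ∈ 𝓐, ∀ a' ∈ 𝓐,
        yProj (R a) ⊆ yProj (R a') ∨ yProj (R a') ⊆ yProj (R a) ∨
        yProj (R a) ∩ yProj (R a') = ∅ := by
  choose! T hT using fun a ha => (h𝓐 a ha).1
  set N := 𝓐.sup T
  have hTN : ∀ a ∈ 𝓐, T a ≤ N := fun a ha => Finset.le_sup ha
  refine ⟨V.image (bitRevPoint N), bitRevPoint N, fun a => apRect N (T a) a.1 a.2.2,
    ?_, fun a ha => apRect_le (h𝓐 a ha).2 N (T a) a.1, fun a ha => ?_, fun a _ a' _ => ?_⟩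
  · rw [Finset.coe_image]
    exact (bitRevPoint_injective N).injOn.bijOn_image
  · rw [hT a ha, Finset.coe_image]
    exact image_AP_inter (hTN a ha) a.1 a.2.2 V
  · rw [yProj_apRect, yProj_apRect]
    exact dyadicIcc_nested _ _ _ _
end

section
/- Let P be a finite set of points in ℝ² with pairwise distinct x-coordinates and let 𝓡 be a finite family of axis-parallel rectangles whose y-projections form a nested family. Then there exist a finite set V of integers, a bijection g : P → V, and for each R ∈ 𝓡 a finite arithmetic progression A_R whose difference is a power of 2, such that for every R ∈ 𝓡 the image g(P ∩ R) equals A_R ∩ V. -/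
open Finset

section Arithmetic

lemma Nat.sum_two_pow_mod_two_pow (s : Finset ℕ) (m : ℕ) :
    (∑ i ∈ s, 2 ^ i) % 2 ^ m = ∑ i ∈ s with i < m, 2 ^ i := by
  have hhigh : 2 ^ m ∣ ∑ i ∈ s with ¬i < m, 2 ^ i :=
    Finset.dvd_sum fun i hi => pow_dvd_pow 2 (not_lt.1 (mem_filter.1 hi).2)
  obtain ⟨n, hn⟩ := hhigh
  rw [← sum_filter_add_sum_filter_not s (· < m), hn, Nat.add_mul_mod_self_left]
  exact Nat.mod_eq_of_lt (Nat.geomSum_lt le_rfl fun i hi => (mem_filter.1 hi).2)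

lemma Nat.sum_two_pow_modEq_iff {s t : Finset ℕ} {m : ℕ} :
    ∑ i ∈ s, 2 ^ i ≡ ∑ i ∈ t, 2 ^ i [MOD 2 ^ m] ↔ {i ∈ s | i < m} = {i ∈ t | i < m} := by
  rw [Nat.ModEq, Nat.sum_two_pow_mod_two_pow, Nat.sum_two_pow_mod_two_pow]
  exact (Finset.geomSum_injective le_rfl).eq_iff

lemma mem_AP_iff_s4 {b M d : ℤ} (hd : 0 < d) (hbM : b ≤ M) (hdvd : d ∣ M - b) {z : ℤ} :
    z ∈ AP b d (((M - b) / d).toNat + 1) ↔ b ≤ z ∧ z ≤ M ∧ d ∣ z - b := by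
  obtain ⟨n, hn⟩ := hdvd
  have hn0 : 0 ≤ n := nonneg_of_mul_nonneg_right (hn ▸ sub_nonneg.2 hbM) hd
  rw [hn, Int.mul_ediv_cancel_left _ hd.ne']
  constructor
  · rintro ⟨i, hi, rfl⟩
    have hin : (i : ℤ) ≤ n := by omega
    exact ⟨by nlinarith, by nlinarith, ⟨i, by ring⟩⟩
  · rintro ⟨hbz, hzM, j, hj⟩
    have hj0 : 0 ≤ j := nonneg_of_mul_nonneg_right (hj ▸ sub_nonneg.2 hbz) hd
    have hjn : j ≤ n := le_of_mul_le_mul_left (by linarith) hd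
    exact ⟨j.toNat, by omega, by rw [Int.toNat_of_nonneg hj0]; linarith⟩

lemma exists_AP_inter_eq {V s : Set ℤ} (hs : s ⊆ V) {b M : ℤ} {k : ℕ} (hM : M ∈ s)
    (hmem : ∀ z ∈ V, z ∈ s ↔ b ≤ z ∧ z ≤ M ∧ 2 ^ k ∣ z - b) :
    ∃ m, 1 ≤ m ∧ s = AP b (2 ^ k) m ∩ V := by
  obtain ⟨hbM, -, hdvd⟩ := (hmem M (hs hM)).1 hM
  refine ⟨((M - b) / 2 ^ k).toNat + 1, le_add_self, Set.ext fun z => ?_⟩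
  rw [Set.mem_inter_iff, mem_AP_iff_s4 (by positivity) hbM hdvd]
  exact ⟨fun hz => ⟨(hmem z (hs hz)).1 hz, hs hz⟩, fun ⟨h, hz⟩ => (hmem z hz).2 h⟩

end Arithmetic

section Laminar

variable {α ι β : Type*} [LinearOrder β]

lemma exists_injOn_antitone (s : Finset ι) (key : ι → β) :
    ∃ idx : ι → ℕ, Set.InjOn idx s ∧ (∀ a ∈ s, idx a < #s) ∧
      ∀ a ∈ s, ∀ b ∈ s, idx a < idx b → key b ≤ key a := by
  classical
  induction s using Finset.induction_on_min_value key with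
  | empty => exact ⟨fun _ => 0, by simp, by simp, by simp⟩
  | insert a s ha hmin ih =>
    obtain ⟨idx, hinj, hlt, hanti⟩ := ih
    refine ⟨fun x => if x = a then #s else idx x, ?_, ?_, ?_⟩
    · intro x hx y hy hxy
      simp only [coe_insert, Set.mem_insert_iff, mem_coe] at hx hy
      have := hlt x; have := hlt y; have := fun hx hy => hinj (x₁ := x) (x₂ := y) hx hy
      grind
    · intro x hx
      rw [card_insert_of_notMem ha]
      have := hlt x
      grind
    · intro x hx y hy hxy
      have := hlt x; have := hlt y; have := hmin x; have := hanti x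
      grind

lemma mem_iff_mem_of_nested {P : Finset α} {A B : Set α} [DecidablePred (· ∈ A)]
    [DecidablePred (· ∈ B)] (hAB : A ⊆ B ∨ B ⊆ A ∨ Disjoint A B)
    (hcard : #{x ∈ P | x ∈ A} ≤ #{x ∈ P | x ∈ B}) {p q : α} (hp : p ∈ P) (hq : q ∈ P)
    (hpA : p ∈ A) (hqA : q ∈ A) : p ∈ B ↔ q ∈ B := by
  rcases hAB with h | h | h
  · exact iff_of_true (h hpA) (h hqA)
  · have heq : {x ∈ P | x ∈ B} = {x ∈ P | x ∈ A} :=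
      eq_of_subset_of_card_le (monotone_filter_right P fun _ _ hx => h hx) hcard
    have hAB : ∀ x ∈ P, x ∈ A → x ∈ B := fun x hx hxA =>
      (mem_filter.1 (heq ▸ mem_filter.2 ⟨hx, hxA⟩)).2
    exact iff_of_true (hAB p hp hpA) (hAB q hq hqA)
  · exact iff_of_false (Set.disjoint_left.1 h hpA) (Set.disjoint_left.1 h hqA)

theorem exists_code_of_laminar (P : Finset α) (S : ι → Set α) (𝓡 : Finset ι)
    (hlam : ∀ r ∈ 𝓡, ∀ r' ∈ 𝓡, S r ⊆ S r' ∨ S r' ⊆ S r ∨ Disjoint (S r) (S r')) :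
    ∃ (c : α → ℕ) (k : ι → ℕ), (∀ p, c p < 2 ^ #𝓡) ∧ (∀ r ∈ 𝓡, k r ≤ #𝓡) ∧
      ∀ r ∈ 𝓡, ∀ p ∈ P, p ∈ S r → ∀ q ∈ P, (q ∈ S r ↔ c q ≡ c p [MOD 2 ^ k r]) := by
  classical
  obtain ⟨idx, hinj, hlt, hanti⟩ := exists_injOn_antitone 𝓡 fun r => #{x ∈ P | x ∈ S r}
  let bits (p : α) : Finset ℕ := {r ∈ 𝓡 | p ∈ S r}.image idx
  have mem_bits {p : α} {j : ℕ} : j ∈ bits p ↔ ∃ r ∈ 𝓡, p ∈ S r ∧ idx r = j := by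
    simp [bits, and_assoc]
  refine ⟨fun p => ∑ j ∈ bits p, 2 ^ j, fun r => idx r + 1,
    fun p => Nat.geomSum_lt le_rfl fun j hj => ?_, hlt, fun r hr p hp hpr q hq => ?_⟩
  · obtain ⟨r, hr, -, rfl⟩ := mem_bits.1 hj
    exact hlt r hr
  rw [Nat.sum_two_pow_modEq_iff]
  constructor
  · intro hqr
    have hsame : ∀ r' ∈ 𝓡, idx r' < idx r + 1 → (q ∈ S r' ↔ p ∈ S r') := by
      intro r' hr' hr'r
      rcases (Nat.lt_succ_iff.1 hr'r).lt_or_eq with hlt' | heq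
      · exact mem_iff_mem_of_nested (hlam r hr r' hr') (hanti r' hr' r hr hlt') hq hp hqr hpr
      · rw [hinj hr' hr heq]
        exact iff_of_true hqr hpr
    ext j
    simp only [mem_filter, mem_bits]
    constructor
    · rintro ⟨⟨r', hr', hq', rfl⟩, hj⟩
      exact ⟨⟨r', hr', (hsame r' hr' hj).1 hq', rfl⟩, hj⟩
    · rintro ⟨⟨r', hr', hp', rfl⟩, hj⟩
      exact ⟨⟨r', hr', (hsame r' hr' hj).2 hp', rfl⟩, hj⟩
  · intro h
    have hr_bit : idx r ∈ {j ∈ bits p | j < idx r + 1} :=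
      mem_filter.2 ⟨mem_bits.2 ⟨r, hr, hpr, rfl⟩, Nat.lt_succ_self _⟩
    obtain ⟨r', hr', hq', he⟩ := mem_bits.1 (mem_filter.1 (h ▸ hr_bit)).1
    rwa [hinj hr' hr he] at hq'

lemma mul_add_lt_mul_add {a b c c' N : ℕ} (hab : a < b) (hc : c < N) :
    a * N + c < b * N + c' :=
  calc a * N + c < (a + 1) * N := by rw [add_one_mul]; omega
    _ ≤ b * N := Nat.mul_le_mul_right N hab
    _ ≤ b * N + c' := Nat.le_add_right _ _

theorem exists_code_monotone (P : Finset α) (f : α → β) (hf : Set.InjOn f P) (S : ι → Set α)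
    (𝓡 : Finset ι)
    (hlam : ∀ r ∈ 𝓡, ∀ r' ∈ 𝓡, S r ⊆ S r' ∨ S r' ⊆ S r ∨ Disjoint (S r) (S r')) :
    ∃ (G : α → ℕ) (k : ι → ℕ), Set.InjOn G P ∧ (∀ p ∈ P, ∀ q ∈ P, G p ≤ G q ↔ f p ≤ f q) ∧
      ∀ r ∈ 𝓡, ∀ p ∈ P, p ∈ S r → ∀ q ∈ P, (q ∈ S r ↔ G q ≡ G p [MOD 2 ^ k r]) := by
  classical
  obtain ⟨c, k, hc, hk, hcS⟩ := exists_code_of_laminar P S 𝓡 hlam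
  let G (p : α) : ℕ := #{x ∈ P | f x < f p} * 2 ^ #𝓡 + c p
  have hG_lt {p q : α} (hp : p ∈ P) (hpq : f p < f q) : G p < G q := by
    refine mul_add_lt_mul_add (card_lt_card ⟨?_, fun h => ?_⟩) (hc p)
    · exact monotone_filter_right P fun x _ hx => hx.trans hpq
    · exact lt_irrefl _ (mem_filter.1 (h (mem_filter.2 ⟨hp, hpq⟩))).2
  have hG_le {p q : α} (hp : p ∈ P) (hq : q ∈ P) : G p ≤ G q ↔ f p ≤ f q := by
    refine ⟨fun h => not_lt.1 fun hqp => (hG_lt hq hqp).not_ge h, fun h => ?_⟩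
    rcases h.lt_or_eq with hlt | heq
    · exact (hG_lt hp hlt).le
    · rw [hf hp hq heq]
  have hG_mod {r : ι} (hr : r ∈ 𝓡) (p : α) : G p ≡ c p [MOD 2 ^ k r] := by
    have hdvd : 2 ^ k r ∣ #{x ∈ P | f x < f p} * 2 ^ #𝓡 :=
      dvd_mul_of_dvd_right (pow_dvd_pow 2 (hk r hr)) _
    simpa only [zero_add] using (Nat.modEq_zero_iff_dvd.2 hdvd).add_right (c p)
  refine ⟨G, k, fun p hp q hq h => hf hp hq ?_, fun p hp q hq => hG_le hp hq, ?_⟩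
  · exact le_antisymm ((hG_le hp hq).1 h.le) ((hG_le hq hp).1 h.ge)
  intro r hr p hp hpr q hq
  rw [hcS r hr p hp hpr q hq]
  exact ⟨fun h => (hG_mod hr q).trans (h.trans (hG_mod hr p).symm),
    fun h => (hG_mod hr q).symm.trans (h.trans (hG_mod hr p))⟩

theorem exists_AP_image_eq {P : Finset α} {f : α → β} {G : α → ℕ} (hGinj : Set.InjOn G P)
    (hG : ∀ p ∈ P, ∀ q ∈ P, G p ≤ G q ↔ f p ≤ f q) {I : Set β} (hI : I.OrdConnected)
    {T : Set α} {k : ℕ} (hT : ∀ p ∈ P, p ∈ T → ∀ q ∈ P, (q ∈ T ↔ G q ≡ G p [MOD 2 ^ k])) :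
    ∃ b : ℤ, ∃ m, 1 ≤ m ∧ (fun p => (G p : ℤ)) '' (P ∩ (f ⁻¹' I ∩ T)) =
      AP b (2 ^ k) m ∩ (fun p => (G p : ℤ)) '' P := by
  set X : Set α := P ∩ (f ⁻¹' I ∩ T)
  have hinj : Set.InjOn (fun p => (G p : ℤ)) P := Nat.cast_injective.comp_injOn hGinj
  rcases X.eq_empty_or_nonempty with hX | hX
  · obtain ⟨b, hb⟩ := ((P.finite_toSet.image fun p => (G p : ℤ))).exists_notMem
    refine ⟨b, 1, le_rfl, ?_⟩
    rw [hX, Set.image_empty, eq_comm, Set.eq_empty_iff_forall_notMem]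
    rintro z ⟨⟨i, hi, rfl⟩, hz⟩
    obtain rfl : i = 0 := by omega
    exact hb (by simpa using hz)
  have hXfin : X.Finite := P.finite_toSet.subset Set.inter_subset_left
  obtain ⟨p₀, hp₀, hmin⟩ := Set.exists_min_image X f hXfin hX
  obtain ⟨p₁, hp₁, hmax⟩ := Set.exists_max_image X f hXfin hX
  refine ⟨G p₀, exists_AP_inter_eq (Set.image_mono Set.inter_subset_left)
    (Set.mem_image_of_mem _ hp₁) ?_⟩
  rintro z ⟨q, hq, rfl⟩
  have hdvd : (2 : ℤ) ^ k ∣ (G q : ℤ) - G p₀ ↔ G q ≡ G p₀ [MOD 2 ^ k] := by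
    rw [Nat.ModEq.comm, Nat.modEq_iff_dvd]
    push_cast
    rfl
  rw [hinj.mem_image_iff Set.inter_subset_left hq, Nat.cast_le, Nat.cast_le, hdvd,
    hG p₀ hp₀.1 q hq, hG q hq p₁ hp₁.1, ← hT p₀ hp₀.1 hp₀.2.2 q hq]
  exact ⟨fun hqX => ⟨hmin q hqX, hmax q hqX, hqX.2.2⟩,
    fun ⟨h₀, h₁, hqT⟩ => ⟨hq, hI.out hp₀.2.1 hp₁.2.1 ⟨h₀, h₁⟩, hqT⟩⟩

end Laminar

theorem statement4_general (P : Finset (ℝ × ℝ))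
    (hP : ∀ p ∈ P, ∀ q ∈ P, p.1 = q.1 → p = q)
    (𝓡 : Finset (ℝ × ℝ × ℝ × ℝ))
    (hnest : ∀ r ∈ 𝓡, ∀ r' ∈ 𝓡,
      yProj r ⊆ yProj r' ∨ yProj r' ⊆ yProj r ∨ yProj r ∩ yProj r' = ∅) :
    ∃ (V : Finset ℤ) (g : ℝ × ℝ → ℤ) (A : ℝ × ℝ × ℝ × ℝ → ℤ × ℕ × ℕ),
      Set.BijOn g (P : Set (ℝ × ℝ)) (V : Set ℤ) ∧
      (∀ r ∈ 𝓡, 1 ≤ (A r).2.2) ∧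
      ∀ r ∈ 𝓡, g '' ((P : Set (ℝ × ℝ)) ∩ rectSet r) =
        AP (A r).1 (2 ^ (A r).2.1) (A r).2.2 ∩ (V : Set ℤ) := by
  classical
  let S (r : ℝ × ℝ × ℝ × ℝ) : Set (ℝ × ℝ) := Prod.snd ⁻¹' yProj r
  have hlam : ∀ r ∈ 𝓡, ∀ r' ∈ 𝓡, S r ⊆ S r' ∨ S r' ⊆ S r ∨ Disjoint (S r) (S r') := by
    intro r hr r' hr'
    rcases hnest r hr r' hr' with h | h | h
    · exact .inl (Set.preimage_mono h)
    · exact .inr (.inl (Set.preimage_mono h))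
    · exact .inr (.inr ((Set.disjoint_iff_inter_eq_empty.2 h).preimage _))
  obtain ⟨G, k, hGinj, hG, hGS⟩ :=
    exists_code_monotone P Prod.fst (fun p hp q hq => hP p hp q hq) S 𝓡 hlam
  have hA : ∀ r ∈ 𝓡, ∃ a : ℤ × ℕ, 1 ≤ a.2 ∧ (fun p => (G p : ℤ)) '' (P ∩ rectSet r) =
      AP a.1 (2 ^ k r) a.2 ∩ (fun p => (G p : ℤ)) '' P := by
    intro r hr
    obtain ⟨b, m, hm, h⟩ := exists_AP_image_eq hGinj hG Set.ordConnected_Icc (hGS r hr)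
    exact ⟨(b, m), hm, h⟩
  choose! A hA_pos hA using hA
  refine ⟨P.image fun p => (G p : ℤ), fun p => G p, fun r => ((A r).1, k r, (A r).2), ?_,
    hA_pos, ?_⟩
  · rw [coe_image]
    exact (Nat.cast_injective.comp_injOn hGinj).bijOn_image
  · intro r hr
    rw [coe_image]
    exact hA r hr

/-- Any finite planar point set `P` with pairwise distinct `x`-coordinates, together with
a finite family `𝓡` of axis-parallel rectangles whose `y`-projections form a nested
family, can be realized by a finite set `V ⊆ ℤ` and finite arithmetic progressions whose
differences are powers of 2: there are a bijection `g : P → V` and for each `r ∈ 𝓡`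
a progression (with base `(A r).1`, difference `2 ^ (A r).2.1` and length `(A r).2.2`)
such that `g '' (P ∩ r) = A_r ∩ V`. -/
theorem statement4 (P : Finset (ℝ × ℝ))
    (hP : ∀ p ∈ P, ∀ q ∈ P, p.1 = q.1 → p = q)
    (𝓡 : Finset (ℝ × ℝ × ℝ × ℝ))
    (hord : ∀ r ∈ 𝓡, r.1 ≤ r.2.1 ∧ r.2.2.1 ≤ r.2.2.2)
    (hnest : ∀ r ∈ 𝓡, ∀ r' ∈ 𝓡,
      yProj r ⊆ yProj r' ∨ yProj r' ⊆ yProj r ∨ yProj r ∩ yProj r' = ∅) :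
    ∃ (V : Finset ℤ) (g : ℝ × ℝ → ℤ) (A : ℝ × ℝ × ℝ × ℝ → ℤ × ℕ × ℕ),
      Set.BijOn g (P : Set (ℝ × ℝ)) (V : Set ℤ) ∧
      (∀ r ∈ 𝓡, 1 ≤ (A r).2.2) ∧
      ∀ r ∈ 𝓡, g '' ((P : Set (ℝ × ℝ)) ∩ rectSet r) =
        AP (A r).1 (2 ^ (A r).2.1) (A r).2.2 ∩ (V : Set ℤ) :=
  statement4_general P hP 𝓡 hnest
end

section
/- Let a : ℕ → ℝ be the van der Corput sequence. Then for every t ∈ ℕ, every b ∈ ℕ with b < 2^t, and every n ∈ ℕ: n ≡ b (mod 2^t) if and only if a_b ≤ a_n < a_b + 2^{−t}. -/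
/-!
Writing `n = (n mod 2^t) + 2^t ⌊n / 2^t⌋` gives `vdc n = vdc (n mod 2^t) + 2^{-t} vdc ⌊n / 2^t⌋`,
and `0 ≤ vdc < 1`, so `vdc n` lies in the dyadic interval `[vdc c, vdc c + 2^{-t})` with
`c = n mod 2^t`. Conversely, on `b < 2^t` the values `2^t vdc b` are distinct natural numbers,
so two such intervals are disjoint unless they coincide.
-/

/-- The van der Corput sequence: `vdc n = ∑ dᵢ 2^{-i-1}` where `n = ∑ dᵢ 2^i` is the
binary expansion of `n` (note every binary digit of `n` with index `≥ n` vanishes). -/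
noncomputable def vdc (n : ℕ) : ℝ :=
  ∑ i ∈ Finset.range n, ((n / 2 ^ i) % 2 : ℕ) * (2 : ℝ) ^ (-(i : ℤ) - 1)

open Finset

lemma vdc_eq_sum_range_of_le {n m : ℕ} (h : n ≤ m) :
    vdc n = ∑ i ∈ range m, ((n / 2 ^ i) % 2 : ℕ) * (2 : ℝ) ^ (-(i : ℤ) - 1) := by
  refine sum_subset (range_subset_range.2 h) fun i _ hi => ?_
  have hi : n < 2 ^ i := n.lt_two_pow_self.trans_le
    (Nat.pow_le_pow_right two_pos (not_lt.1 (mem_range.not.1 hi)))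
  simp [Nat.div_eq_of_lt hi]

lemma vdc_zero : vdc 0 = 0 := by simp [vdc]

lemma vdc_eq_add_vdc_div_two (n : ℕ) : vdc n = (n % 2 : ℕ) / 2 + vdc (n / 2) / 2 := by
  rw [vdc_eq_sum_range_of_le n.le_succ, sum_range_succ',
    vdc_eq_sum_range_of_le (Nat.div_le_self n 2), sum_div]
  have hterm (i : ℕ) : ((n / 2 ^ (i + 1)) % 2 : ℕ) * (2 : ℝ) ^ (-((i + 1 : ℕ) : ℤ) - 1)
      = ((n / 2 / 2 ^ i) % 2 : ℕ) * (2 : ℝ) ^ (-(i : ℤ) - 1) / 2 := by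
    rw [pow_succ', ← Nat.div_div_eq_div_mul, mul_div_assoc, div_eq_mul_inv, ← zpow_neg_one,
      ← zpow_add₀ two_ne_zero]
    push_cast
    ring_nf
  simp only [hterm, pow_zero, Nat.div_one, CharP.cast_eq_zero, neg_zero, zero_sub, zpow_neg_one]
  ring

lemma vdc_nonneg (n : ℕ) : 0 ≤ vdc n :=
  sum_nonneg fun _ _ => by positivity

lemma vdc_lt_one (n : ℕ) : vdc n < 1 := by
  induction n using Nat.strong_induction_on with
  | _ n ih =>
  rcases n.eq_zero_or_pos with rfl | hn
  · simp [vdc_zero]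
  · have hdigit : ((n % 2 : ℕ) : ℝ) ≤ 1 := by exact_mod_cast Nat.le_of_lt_succ (n.mod_lt two_pos)
    rw [vdc_eq_add_vdc_div_two]
    linarith [ih (n / 2) (Nat.div_lt_self hn one_lt_two)]

lemma mod_two_eq_one_iff_half_le_vdc (n : ℕ) : n % 2 = 1 ↔ 1 / 2 ≤ vdc n := by
  rw [vdc_eq_add_vdc_div_two]
  have := vdc_nonneg (n / 2)
  have := vdc_lt_one (n / 2)
  rcases n.mod_two_eq_zero_or_one with h | h <;> simp only [h] <;> norm_num <;> linarith

lemma vdc_injective : Function.Injective vdc := by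
  intro m n h
  induction hs : m + n using Nat.strong_induction_on generalizing m n with
  | _ s ih =>
  have hdigit : m % 2 = n % 2 := by
    have := (mod_two_eq_one_iff_half_le_vdc m).trans (h ▸ (mod_two_eq_one_iff_half_le_vdc n).symm)
    omega
  have hhalf : vdc (m / 2) = vdc (n / 2) := by
    rw [vdc_eq_add_vdc_div_two m, vdc_eq_add_vdc_div_two n, hdigit] at h
    linarith
  rcases s.eq_zero_or_pos with rfl | hs0
  · omega
  · have := ih (m / 2 + n / 2) (by omega) hhalf rfl
    omega

lemma exists_nat_two_pow_mul_vdc_eq {t b : ℕ} (hb : b < 2 ^ t) :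
    ∃ k : ℕ, (2 : ℝ) ^ t * vdc b = k := by
  induction t generalizing b with
  | zero => exact ⟨0, by simp [Nat.lt_one_iff.1 hb, vdc_zero]⟩
  | succ t ih =>
    obtain ⟨k, hk⟩ := ih (Nat.div_lt_of_lt_mul (pow_succ' 2 t ▸ hb))
    refine ⟨2 ^ t * (b % 2) + k, ?_⟩
    rw [vdc_eq_add_vdc_div_two, pow_succ]
    push_cast
    linear_combination hk

lemma vdc_eq_vdc_mod_add (t n : ℕ) :
    vdc n = vdc (n % 2 ^ t) + ((2 : ℝ) ^ t)⁻¹ * vdc (n / 2 ^ t) := by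
  induction t generalizing n with
  | zero => simp [Nat.mod_one, vdc_zero]
  | succ t ih =>
    have hdigit : n % 2 ^ (t + 1) % 2 = n % 2 := Nat.mod_mod_of_dvd n (dvd_pow_self 2 t.succ_ne_zero)
    have hhalf : n % 2 ^ (t + 1) / 2 = n / 2 % 2 ^ t := by
      rw [pow_succ', Nat.mod_mul_right_div_self]
    rw [vdc_eq_add_vdc_div_two n, ih (n / 2), vdc_eq_add_vdc_div_two (n % 2 ^ (t + 1)), hdigit,
      hhalf, Nat.div_div_eq_div_mul, ← pow_succ', pow_succ]
    ring

lemma eq_of_abs_vdc_sub_lt {t b c : ℕ} (hb : b < 2 ^ t) (hc : c < 2 ^ t)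
    (h : |vdc b - vdc c| < ((2 : ℝ) ^ t)⁻¹) : b = c := by
  obtain ⟨k, hk⟩ := exists_nat_two_pow_mul_vdc_eq hb
  obtain ⟨l, hl⟩ := exists_nat_two_pow_mul_vdc_eq hc
  have hkl : |(k : ℝ) - l| < 1 := by
    rw [← hk, ← hl, ← mul_sub, abs_mul, abs_of_pos (by positivity)]
    calc (2 : ℝ) ^ t * |vdc b - vdc c| < 2 ^ t * ((2 : ℝ) ^ t)⁻¹ := by gcongr
      _ = 1 := by simp
  have hkl_eq : k = l := by
    rw [abs_sub_lt_iff] at hkl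
    have : k < l + 1 := by exact_mod_cast (by linarith : (k : ℝ) < l + 1)
    have : l < k + 1 := by exact_mod_cast (by linarith : (l : ℝ) < k + 1)
    omega
  apply vdc_injective
  have h2t : (2 : ℝ) ^ t ≠ 0 := by positivity
  rw [← mul_right_inj' h2t, hk, hl, hkl_eq]

/-- For every `t`, every `b < 2^t` and every `n`: `n ≡ b (mod 2^t)` if and only if
`vdc b ≤ vdc n < vdc b + 2^{-t}`. -/
theorem statement12 (t b n : ℕ) (hb : b < 2 ^ t) :
    n % 2 ^ t = b ↔ vdc b ≤ vdc n ∧ vdc n < vdc b + (2 : ℝ) ^ (-(t : ℤ)) := by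
  rw [zpow_neg, zpow_natCast, vdc_eq_vdc_mod_add t n]
  have hq0 := vdc_nonneg (n / 2 ^ t)
  have hq1 := vdc_lt_one (n / 2 ^ t)
  have hpos : (0 : ℝ) < ((2 : ℝ) ^ t)⁻¹ := by positivity
  constructor
  · rintro rfl
    constructor <;> nlinarith
  · rintro ⟨hlo, hhi⟩
    refine eq_of_abs_vdc_sub_lt (Nat.mod_lt n (by positivity)) hb ?_
    rw [abs_sub_lt_iff]
    constructor <;> nlinarith
end

section
/- Let a : ℕ → ℝ be the van der Corput sequence. Then the family of half-open intervals {[a_b, a_b + 2^{−t}) : t ∈ ℕ, b ∈ ℕ, b < 2^t} is nested: for any t, t' ∈ ℕ, b < 2^t, and b' < 2^{t'}, the intervals [a_b, a_b + 2^{−t}) and [a_{b'}, a_{b'} + 2^{−t'}) are either disjoint or one is contained in the other. -/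
lemma vdc_eq_sum_range_of_lt_two_pow {b t : ℕ} (hb : b < 2 ^ t) :
    vdc b = ∑ i ∈ Finset.range t, ((b / 2 ^ i) % 2 : ℕ) * (2 : ℝ) ^ (-(i : ℤ) - 1) := by
  have digit_eq_zero {n : ℕ} (hn : b < 2 ^ n) :
      ∀ i ≥ n, ((b / 2 ^ i) % 2 : ℕ) * (2 : ℝ) ^ (-(i : ℤ) - 1) = 0 := fun i hi => by
    rw [Nat.div_eq_of_lt (hn.trans_le (Nat.pow_le_pow_right two_pos hi))]
    simp
  rcases le_total b t with h | h
  · exact (Finset.eventually_constant_sum (digit_eq_zero Nat.lt_two_pow_self) h).symm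
  · exact Finset.eventually_constant_sum (digit_eq_zero hb) h

lemma exists_vdc_eq_intCast_div_two_pow {b t : ℕ} (hb : b < 2 ^ t) :
    ∃ m : ℤ, vdc b = m / 2 ^ t := by
  refine ⟨∑ i ∈ Finset.range t, ((b / 2 ^ i) % 2 : ℕ) * 2 ^ (t - 1 - i), ?_⟩
  rw [vdc_eq_sum_range_of_lt_two_pow hb, eq_div_iff (by positivity), Finset.sum_mul]
  push_cast
  refine Finset.sum_congr rfl fun i hi => ?_
  rw [mul_assoc, ← zpow_natCast, ← zpow_natCast, ← zpow_add₀ two_ne_zero]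
  congr 2
  have := Finset.mem_range.1 hi
  omega

def dyadicIco (t : ℕ) (m : ℤ) : Set ℝ :=
  Set.Ico ((m : ℝ) / 2 ^ t) (m / 2 ^ t + (2 : ℝ) ^ (-(t : ℤ)))

lemma mem_dyadicIco_iff {t : ℕ} {m : ℤ} {y : ℝ} : y ∈ dyadicIco t m ↔ ⌊y * 2 ^ t⌋ = m := by
  have h2t : (0 : ℝ) < 2 ^ t := by positivity
  rw [dyadicIco, Set.mem_Ico, Int.floor_eq_iff, zpow_neg, zpow_natCast, inv_eq_one_div, ← add_div,
    div_le_iff₀ h2t, lt_div_iff₀ h2t]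

lemma floor_mul_two_pow_eq_floor_mul_two_pow_add_div (y : ℝ) (t k : ℕ) :
    ⌊y * 2 ^ t⌋ = ⌊y * 2 ^ (t + k)⌋ / (2 ^ k : ℕ) := by
  rw [← Int.floor_div_natCast, pow_add, ← mul_assoc]
  push_cast
  rw [mul_div_cancel_right₀ _ (by positivity)]

lemma dyadicIco_subset_or_disjoint {t t' : ℕ} (h : t ≤ t') (m m' : ℤ) :
    dyadicIco t' m' ⊆ dyadicIco t m ∨ Disjoint (dyadicIco t m) (dyadicIco t' m') := by
  obtain ⟨k, rfl⟩ := Nat.exists_eq_add_of_le h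
  rw [or_iff_not_imp_right, Set.not_disjoint_iff]
  rintro ⟨x, hx, hx'⟩ y hy
  rw [mem_dyadicIco_iff] at hx hx' hy ⊢
  rw [floor_mul_two_pow_eq_floor_mul_two_pow_add_div, hy, ← hx',
    ← floor_mul_two_pow_eq_floor_mul_two_pow_add_div, hx]

/-- The family of half-open intervals `[vdc b, vdc b + 2^{-t})` over `t ∈ ℕ`, `b < 2^t`
is nested: any two of them are disjoint or one contains the other. -/
theorem statement14 (t t' b b' : ℕ) (hb : b < 2 ^ t) (hb' : b' < 2 ^ t') :
    Set.Ico (vdc b) (vdc b + (2 : ℝ) ^ (-(t : ℤ))) ⊆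
        Set.Ico (vdc b') (vdc b' + (2 : ℝ) ^ (-(t' : ℤ))) ∨
    Set.Ico (vdc b') (vdc b' + (2 : ℝ) ^ (-(t' : ℤ))) ⊆
        Set.Ico (vdc b) (vdc b + (2 : ℝ) ^ (-(t : ℤ))) ∨
    Set.Ico (vdc b) (vdc b + (2 : ℝ) ^ (-(t : ℤ))) ∩
        Set.Ico (vdc b') (vdc b' + (2 : ℝ) ^ (-(t' : ℤ))) = ∅ := by
  obtain ⟨m, hm⟩ := exists_vdc_eq_intCast_div_two_pow hb
  obtain ⟨m', hm'⟩ := exists_vdc_eq_intCast_div_two_pow hb'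
  rw [hm, hm']
  change dyadicIco t m ⊆ dyadicIco t' m' ∨ dyadicIco t' m' ⊆ dyadicIco t m ∨
    dyadicIco t m ∩ dyadicIco t' m' = ∅
  rw [← Set.disjoint_iff_inter_eq_empty]
  rcases le_total t t' with h | h
  · exact Or.inr (dyadicIco_subset_or_disjoint h m m')
  · rcases dyadicIco_subset_or_disjoint h m' m with hsub | hdisj
    · exact Or.inl hsub
    · exact Or.inr (Or.inr hdisj.symm)
end
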